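/- arXiv:2107.13776 — 3 statements merged into one kernel-verified Lean document; each statement's English description precedes it below -/
import Mathlib

section
/- Let b > 0, Ω ≥ 0 and let m ≥ 1 be an integer. Then for every real y, (1/(2b)) · (2bm/(2bm+Ω))^m · exp(−y/(2b)) · ∑'_{n=0}^{∞} (m)_n · (Ω y/(2b(2bm+Ω)))^n / (n!)² = (1/(2b)) · (2bm/(2bm+Ω))^m · exp(−m y/(2bm+Ω)) · ∑_{i=0}^{m−1} [(m−1)! / ((m−1−i)! · (i!)²)] · (Ω y/(2b(2bm+Ω)))^i. That is, for integer fading order m the squared shadowed-Rician probability density, originally expressed through the confluent hypergeometric series, equals a finite algebraic closed form. -/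
/-- The rising factorial (Pochhammer symbol): `(m)_n = m·(m+1)···(m+n−1)`, with `(m)_0 = 1`. -/
def risingFactorial (m : ℕ) : ℕ → ℕ
  | 0 => 1
  | n + 1 => risingFactorial m n * (m + n)

/-!
This is Kummer's transformation `₁F₁(m, 1, z) = e^z ₁F₁(1 - m, 1, -z)`, whose right side is a
polynomial when `m = k + 1`. Directly: `(k + 1)_n / n! = C(k + n, n) = ∑_{i ≤ k} C(k, i) C(n, i)`
by Vandermonde, and `∑_n C(n, i) z^n / n! = z^i e^z / i!`, so the series is
`e^z ∑_{i ≤ k} C(k, i) z^i / i!`. The factor `e^z` then merges with `exp(-y/(2b))` into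
`exp(-m y/(2bm + Ω))`.
-/

open Finset

theorem risingFactorial_eq_ascFactorial (m n : ℕ) : risingFactorial m n = m.ascFactorial n := by
  induction n with
  | zero => rfl
  | succ n ih => rw [risingFactorial, Nat.ascFactorial_succ, ih, Nat.mul_comm]

theorem Nat.sum_range_choose_mul_choose (k n : ℕ) :
    ∑ i ∈ range (k + 1), k.choose i * n.choose i = (k + n).choose n := by
  rw [← Nat.choose_symm_add, add_comm k n, Nat.add_choose_eq,
    Finset.Nat.sum_antidiagonal_eq_sum_range_succ_mk]
  refine sum_congr rfl fun i hi => ?_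
  rw [Nat.choose_symm (Nat.lt_succ_iff.mp (mem_range.mp hi)), mul_comm]

theorem risingFactorial_succ_eq_factorial_mul_sum (k n : ℕ) :
    risingFactorial (k + 1) n = n.factorial * ∑ i ∈ range (k + 1), k.choose i * n.choose i := by
  rw [risingFactorial_eq_ascFactorial, Nat.ascFactorial_eq_factorial_mul_choose,
    Nat.sum_range_choose_mul_choose]

theorem Real.hasSum_choose_mul_pow_div_factorial (i : ℕ) (z : ℝ) :
    HasSum (fun n => (n.choose i : ℝ) * z ^ n / n.factorial) (z ^ i / i.factorial * exp z) := by
  have hshift : ∀ n, ((n + i).choose i : ℝ) * z ^ (n + i) / (n + i).factorial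
      = z ^ i / i.factorial * (z ^ n / n.factorial) := by
    intro n
    rw [add_comm n i, Nat.cast_add_choose, pow_add]
    field_simp
  have hhead : ∑ n ∈ range i, (n.choose i : ℝ) * z ^ n / n.factorial = 0 :=
    sum_eq_zero fun n hn => by simp [Nat.choose_eq_zero_of_lt (mem_range.mp hn)]
  refine (hasSum_nat_add_iff' (f := fun n => (n.choose i : ℝ) * z ^ n / n.factorial) i).mp ?_
  rw [hhead, sub_zero, exp_eq_exp_ℝ]
  simp only [hshift]
  exact (NormedSpace.expSeries_div_hasSum_exp z).mul_left (z ^ i / i.factorial)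

theorem hasSum_risingFactorial_mul_pow_div_factorial_sq (k : ℕ) (z : ℝ) :
    HasSum (fun n => (risingFactorial (k + 1) n : ℝ) * z ^ n / (n.factorial : ℝ) ^ 2)
      (Real.exp z * ∑ i ∈ range (k + 1), (k.choose i : ℝ) / i.factorial * z ^ i) := by
  have hterm : ∀ n, (risingFactorial (k + 1) n : ℝ) * z ^ n / (n.factorial : ℝ) ^ 2
      = ∑ i ∈ range (k + 1), (k.choose i : ℝ) * ((n.choose i : ℝ) * z ^ n / n.factorial) := by
    intro n
    rw [risingFactorial_succ_eq_factorial_mul_sum]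
    simp_rw [mul_div_assoc, ← mul_assoc, ← sum_mul]
    push_cast
    field_simp
  simp only [hterm, mul_sum]
  refine hasSum_sum fun i _ => ?_
  rw [show Real.exp z * ((k.choose i : ℝ) / i.factorial * z ^ i)
      = k.choose i * (z ^ i / i.factorial * Real.exp z) by ring]
  exact (Real.hasSum_choose_mul_pow_div_factorial i z).mul_left _

theorem Nat.factorial_div_factorial_mul_factorial_sq {k i : ℕ} (hi : i ≤ k) :
    (k.factorial : ℝ) / ((k - i).factorial * (i.factorial : ℝ) ^ 2) = k.choose i / i.factorial := by
  rw [Nat.cast_choose ℝ hi]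
  field_simp

/-- For integer fading order `m ≥ 1`, the squared shadowed-Rician density, originally
expressed through the confluent hypergeometric series
`₁F₁(m,1,z) = ∑_n (m)_n z^n/(n!)²` evaluated at `z = Ωy/(2b(2bm+Ω))`,
equals a finite algebraic closed form. -/
theorem ssr_pdf_integer_order_closed_form (b Ω : ℝ) (hb : 0 < b) (hΩ : 0 ≤ Ω)
    (m : ℕ) (hm : 1 ≤ m) (y : ℝ) :
    (1 / (2 * b)) * (2 * b * m / (2 * b * m + Ω)) ^ m * Real.exp (-y / (2 * b)) *
        ∑' n : ℕ, (risingFactorial m n : ℝ) *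
            (Ω * y / (2 * b * (2 * b * m + Ω))) ^ n / ((Nat.factorial n : ℝ)) ^ 2
      = (1 / (2 * b)) * (2 * b * m / (2 * b * m + Ω)) ^ m *
          Real.exp (-(m * y) / (2 * b * m + Ω)) *
          ∑ i ∈ Finset.range m,
            ((Nat.factorial (m - 1) : ℝ) /
                ((Nat.factorial (m - 1 - i) : ℝ) * (Nat.factorial i : ℝ) ^ 2)) *
              (Ω * y / (2 * b * (2 * b * m + Ω))) ^ i := by
  obtain ⟨k, rfl⟩ := Nat.exists_eq_add_of_le' hm
  have hden : 2 * b * ((k + 1 : ℕ) : ℝ) + Ω ≠ 0 := by positivity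
  have hexp : Real.exp (-y / (2 * b)) * Real.exp (Ω * y / (2 * b * (2 * b * ↑(k + 1) + Ω)))
      = Real.exp (-(↑(k + 1) * y) / (2 * b * ↑(k + 1) + Ω)) := by
    rw [← Real.exp_add]
    congr 1
    field_simp [hb.ne', hden]
    push_cast
    ring
  have hcoeff : ∀ i ∈ range (k + 1),
      (k.factorial : ℝ) / ((k - i).factorial * (i.factorial : ℝ) ^ 2) = k.choose i / i.factorial :=
    fun i hi => Nat.factorial_div_factorial_mul_factorial_sq (Nat.lt_succ_iff.mp (mem_range.mp hi))
  rw [(hasSum_risingFactorial_mul_pow_div_factorial_sq k _).tsum_eq, Nat.add_sub_cancel,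
    sum_congr rfl fun i hi => by rw [← hcoeff i hi], ← hexp]
  ring
end

section
/- Let b > 0, Ω ≥ 0 and let m ≥ 1 be an integer. Then ∫_0^∞ y · f̃(y; b, m, Ω) dy = 2b + Ω; that is, the mean of the integer-order squared shadowed-Rician distribution equals twice the scattered-component power parameter b plus the line-of-sight power parameter Ω. -/
/-!
Write `m = n + 1` and `Ω = 2bm·x`, and put `σ = 2b(1 + x)`. The density becomes
`e^{-y/σ} / (2b(1 + x)^m) · ∑ C(n, i)/i! · (x y/σ)^i`, a finite combination of Gamma kernels.
Each first moment is the Gamma integral `∫ y^{i+1} e^{-y/σ} = (i+1)! σ^{i+2}`. This leaves the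
binomial sum `∑ C(n, i)(i + 1) x^i = d/dx [x(1 + x)^n] = (1 + x)^{n-1}(1 + m x)`. Everything then
collapses to `2b(1 + m x) = 2b + Ω`.
-/

open MeasureTheory

/-- The integer-order squared shadowed-Rician (SSR) density with parameters
`b > 0`, `Ω ≥ 0` and integer fading order `m ≥ 1`. -/
noncomputable def ssrPdf (b : ℝ) (m : ℕ) (Ω : ℝ) (y : ℝ) : ℝ :=
  (1 / (2 * b)) * (2 * b * m / (2 * b * m + Ω)) ^ m *
    Real.exp (-(m * y) / (2 * b * m + Ω)) *
    ∑ i ∈ Finset.range m,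
      ((Nat.factorial (m - 1) : ℝ) /
          ((Nat.factorial (m - 1 - i) : ℝ) * (Nat.factorial i : ℝ) ^ 2)) *
        (Ω * y / (2 * b * (2 * b * m + Ω))) ^ i

open Finset Real Nat

section Binomial

variable {R : Type*} [CommSemiring R]

theorem sum_range_choose_mul_pow (n : ℕ) (x : R) :
    ∑ i ∈ range (n + 1), (n.choose i : R) * x ^ i = (1 + x) ^ n := by
  rw [add_comm 1 x, add_pow]
  exact sum_congr rfl fun i _ => by rw [one_pow]; ring

-- Multiplied through by `1 + x` so that no exponent `n - 1` (truncated at `n = 0`) appears.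
theorem sum_range_mul_choose_mul_pow_mul_one_add (n : ℕ) (x : R) :
    (∑ i ∈ range (n + 1), (i * n.choose i : R) * x ^ i) * (1 + x) = n * x * (1 + x) ^ n := by
  cases n with
  | zero => simp
  | succ k =>
    have hterm (i : ℕ) : ((i + 1 : ℕ) * (k + 1).choose (i + 1) : R) * x ^ (i + 1) =
        (k + 1) * x * ((k.choose i : R) * x ^ i) := by
      have := congrArg (Nat.cast (R := R)) (Nat.add_one_mul_choose_eq k i)
      push_cast at this ⊢
      rw [mul_comm (i + 1 : R), ← this]
      ring
    rw [sum_range_succ', sum_congr rfl fun i _ => hterm i, ← mul_sum,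
      sum_range_choose_mul_pow]
    push_cast
    ring

theorem sum_range_choose_mul_add_one_mul_pow_mul_one_add (n : ℕ) (x : R) :
    (∑ i ∈ range (n + 1), (n.choose i * (i + 1) : R) * x ^ i) * (1 + x) =
      (1 + x) ^ n * (1 + (n + 1) * x) := by
  have hsplit : ∑ i ∈ range (n + 1), (n.choose i * (i + 1) : R) * x ^ i =
      ∑ i ∈ range (n + 1), (i * n.choose i : R) * x ^ i +
        ∑ i ∈ range (n + 1), (n.choose i : R) * x ^ i := by
    rw [← sum_add_distrib]
    exact sum_congr rfl fun i _ => by ring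
  rw [hsplit, add_mul, sum_range_mul_choose_mul_pow_mul_one_add, sum_range_choose_mul_pow]
  ring

end Binomial

theorem integrableOn_pow_mul_exp_neg_mul_Ioi (n : ℕ) {c : ℝ} (hc : 0 < c) :
    IntegrableOn (fun y : ℝ => y ^ n * exp (-(c * y))) (Set.Ioi 0) := by
  simpa [Real.rpow_natCast] using
    integrableOn_rpow_mul_exp_neg_mul_rpow (p := 1) (s := n)
      (by linarith [n.cast_nonneg (α := ℝ)]) zero_lt_one hc

theorem integral_pow_mul_exp_neg_mul_Ioi (n : ℕ) {c : ℝ} (hc : 0 < c) :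
    ∫ y in Set.Ioi (0 : ℝ), y ^ n * exp (-(c * y)) = n ! / c ^ (n + 1) := by
  have h := integral_rpow_mul_exp_neg_mul_Ioi (a := n + 1) (by positivity) hc
  rw [add_sub_cancel_right, Real.Gamma_nat_eq_factorial] at h
  norm_cast at h
  rw [h, one_div, inv_pow, div_eq_inv_mul]

theorem integral_sum_mul_pow_mul_exp_neg_mul_Ioi {ι : Type*} (s : Finset ι) (a : ι → ℝ)
    (k : ι → ℕ) {c : ℝ} (hc : 0 < c) :
    ∫ y in Set.Ioi (0 : ℝ), ∑ i ∈ s, a i * (y ^ k i * exp (-(c * y))) =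
      ∑ i ∈ s, a i * ((k i)! / c ^ (k i + 1)) := by
  rw [integral_finsetSum _ fun i _ => (integrableOn_pow_mul_exp_neg_mul_Ioi (k i) hc).const_mul _]
  simp only [integral_const_mul, integral_pow_mul_exp_neg_mul_Ioi _ hc]

theorem factorial_div_factorial_mul_factorial_sq {K : Type*} [Field K] [CharZero K] {n i : ℕ}
    (hi : i ≤ n) : (n ! / ((n - i)! * (i ! : K) ^ 2)) = n.choose i / i ! := by
  rw [Nat.cast_choose K hi]
  field_simp

theorem ssrPdf_succ_eq {b : ℝ} (hb : b ≠ 0) {x : ℝ} (hx : 1 + x ≠ 0) (n : ℕ) (y : ℝ) :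
    ssrPdf b (n + 1) (2 * b * (n + 1) * x) y =
      exp (-((2 * b * (1 + x))⁻¹ * y)) / (2 * b * (1 + x) ^ (n + 1)) *
        ∑ i ∈ range (n + 1), (n.choose i / i ! : ℝ) * (x * y / (2 * b * (1 + x))) ^ i := by
  unfold ssrPdf
  push_cast
  have hsum : ∑ i ∈ range (n + 1), (n ! / ((n - i)! * (i ! : ℝ) ^ 2)) *
        (2 * b * (n + 1) * x * y / (2 * b * (2 * b * (n + 1) + 2 * b * (n + 1) * x))) ^ i =
      ∑ i ∈ range (n + 1), (n.choose i / i ! : ℝ) * (x * y / (2 * b * (1 + x))) ^ i := by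
    refine sum_congr rfl fun i hi => ?_
    rw [factorial_div_factorial_mul_factorial_sq (Nat.lt_succ_iff.mp (mem_range.mp hi))]
    congr 2
    field_simp
  have hexp : -((n + 1) * y) / (2 * b * (n + 1) + 2 * b * (n + 1) * x) =
      -((2 * b * (1 + x))⁻¹ * y) := by
    field_simp
  have hratio : 2 * b * (n + 1) / (2 * b * (n + 1) + 2 * b * (n + 1) * x) = (1 + x)⁻¹ := by
    field_simp
  rw [hsum, hexp, hratio, inv_pow]
  field_simp

theorem integral_mul_ssrPdf_succ {b : ℝ} (hb : 0 < b) {x : ℝ} (hx : 0 < 1 + x) (n : ℕ) :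
    ∫ y in Set.Ioi (0 : ℝ), y * ssrPdf b (n + 1) (2 * b * (n + 1) * x) y =
      2 * b * (1 + (n + 1) * x) := by
  set σ := 2 * b * (1 + x) with hσ
  have hσpos : 0 < σ := by positivity
  have hpoint (y : ℝ) : y * ssrPdf b (n + 1) (2 * b * (n + 1) * x) y =
      ∑ i ∈ range (n + 1), (n.choose i / i ! * (x / σ) ^ i / (2 * b * (1 + x) ^ (n + 1))) *
        (y ^ (i + 1) * exp (-(σ⁻¹ * y))) := by
    rw [ssrPdf_succ_eq hb.ne' hx.ne', mul_sum, mul_sum]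
    refine sum_congr rfl fun i _ => ?_
    ring
  have hterm (i : ℕ) :
      n.choose i / i ! * (x / σ) ^ i / (2 * b * (1 + x) ^ (n + 1)) *
          ((i + 1)! / σ⁻¹ ^ (i + 1 + 1)) =
        2 * b * (1 + x) ^ 2 / (1 + x) ^ (n + 1) * (n.choose i * (i + 1) * x ^ i) := by
    rw [Nat.factorial_succ, inv_pow, div_inv_eq_mul, div_pow]
    push_cast
    field_simp
    rw [hσ]
    ring
  simp_rw [hpoint]
  rw [integral_sum_mul_pow_mul_exp_neg_mul_Ioi _ _ _ (inv_pos.mpr hσpos),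
    sum_congr rfl fun i _ => hterm i, ← mul_sum,
    eq_div_of_mul_eq hx.ne' (sum_range_choose_mul_add_one_mul_pow_mul_one_add n x)]
  field_simp
  ring

/-- The mean of the integer-order squared shadowed-Rician distribution is `2b + Ω`. -/
theorem ssr_mean (b Ω : ℝ) (hb : 0 < b) (hΩ : 0 ≤ Ω) (m : ℕ) (hm : 1 ≤ m) :
    ∫ y in Set.Ioi (0:ℝ), y * ssrPdf b m Ω y = 2 * b + Ω := by
  obtain ⟨n, rfl⟩ : ∃ n, m = n + 1 := ⟨m - 1, by omega⟩
  obtain ⟨x, hx, rfl⟩ : ∃ x, 0 ≤ x ∧ Ω = 2 * b * (n + 1) * x :=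
    ⟨Ω / (2 * b * (n + 1)), by positivity, by field_simp⟩
  rw [integral_mul_ssrPdf_succ hb (by linarith)]
  ring
end

section
/- Let (Ω', 𝓕, ℙ) be a probability space, let b > 0, Ω ≥ 0, let m ≥ 1 be an integer, and let Y : Ω' → ℝ be a random variable whose probability density function with respect to Lebesgue measure is almost everywhere equal to y ↦ (if y ≥ 0 then f̃(y; b, m, Ω) else 0). Then Y is integrable and its expectation equals E[Y] = 2b + Ω. -/
/-
Write `p = 2bm + Ω` and `x = Ω / p`. For `y ≥ 0` the SSR density is the mixture
`∑_{i<m} C(m-1, i) xⁱ (1-x)^(m-1-i) · Gamma(i+1, m/p)(y)` of Gamma densities with Bernstein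
weights; this is a term-by-term identity once `1 - x = 2b · (m/p)`. Hence it integrates to `1`,
so the law of `Y` has no singular part and `E[Y] = ∫ y f(y) dy`. A Gamma(a, r) law has mean
`a / r`, and the Bernstein weights have total mass `1` and mean `(m-1)x`, so
`E[Y] = (1 + (m-1)x) · p / m = 2b + Ω`.
-/

open MeasureTheory
open scoped ProbabilityTheory

open ProbabilityTheory Real Finset Polynomial
open scoped Nat

namespace MeasureTheory

variable {Ω E : Type*} [MeasurableSpace Ω] [MeasurableSpace E] {P : Measure Ω} {μ : Measure E}

theorem hasPDF_of_lintegral_pdf_eq_one [IsProbabilityMeasure P] {X : Ω → E}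
    (hX : AEMeasurable X P) (h : ∫⁻ x, pdf X P μ x ∂μ = 1) : HasPDF X P μ := by
  have : IsProbabilityMeasure (P.map X) := Measure.isProbabilityMeasure_map hX
  refine hasPDF_of_map_eq_withDensity hX _ (measurable_pdf X P μ).aemeasurable
    (Measure.eq_of_le_of_measure_univ_eq (Measure.withDensity_rnDeriv_le _ _) ?_).symm
  rw [withDensity_apply _ .univ, setLIntegral_univ]
  exact h.trans measure_univ.symm

theorem integrable_and_integral_eq_of_pdf_ae_eq [IsProbabilityMeasure P] {X : Ω → ℝ}
    (hX : AEMeasurable X P) {f : ℝ → ℝ} (hf_nonneg : 0 ≤ᵐ[volume] f)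
    (hf_int : Integrable f) (hf_one : ∫ x, f x = 1) (hxf_int : Integrable fun x ↦ x * f x)
    (hpdf : pdf X P =ᵐ[volume] fun x ↦ ENNReal.ofReal (f x)) :
    Integrable X P ∧ ∫ ω, X ω ∂P = ∫ x, x * f x := by
  have : HasPDF X P := hasPDF_of_lintegral_pdf_eq_one hX <| by
    rw [lintegral_congr_ae hpdf, ← ofReal_integral_eq_lintegral_ofReal hf_int hf_nonneg, hf_one,
      ENNReal.ofReal_one]
  have hpdf_real : (fun x ↦ (pdf X P volume x).toReal • x) =ᵐ[volume] fun x ↦ x * f x := by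
    filter_upwards [hpdf, hf_nonneg] with x hx hx0
    rw [hx, ENNReal.toReal_ofReal hx0, smul_eq_mul, mul_comm]
  constructor
  · exact (pdf.integrable_pdf_smul_iff measurable_id.aestronglyMeasurable).mp
      (hxf_int.congr hpdf_real.symm)
  · rw [← integral_congr_ae hpdf_real]
    exact (pdf.integral_pdf_smul measurable_id.aestronglyMeasurable).symm

end MeasureTheory

namespace ProbabilityTheory

lemma gammaPDFReal_natCast_add_one (k : ℕ) (r : ℝ) {x : ℝ} (hx : 0 ≤ x) :
    gammaPDFReal (k + 1) r x = r ^ (k + 1) / k ! * x ^ k * exp (-(r * x)) := by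
  rw [gammaPDFReal, if_pos hx, Gamma_nat_eq_factorial, add_sub_cancel_right, rpow_natCast,
    ← Nat.cast_succ, rpow_natCast]

lemma integrable_gammaPDFReal {a r : ℝ} (ha : 0 < a) (hr : 0 < r) :
    Integrable (gammaPDFReal a r) := by
  refine ⟨(measurable_gammaPDFReal a r).aestronglyMeasurable, ?_⟩
  rw [hasFiniteIntegral_iff_ofReal (ae_of_all _ (gammaPDFReal_nonneg ha hr))]
  exact (lintegral_gammaPDF_eq_one ha hr).trans_lt ENNReal.one_lt_top

lemma integral_gammaPDFReal {a r : ℝ} (ha : 0 < a) (hr : 0 < r) :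
    ∫ x, gammaPDFReal a r x = 1 := by
  rw [integral_eq_lintegral_of_nonneg_ae (ae_of_all _ (gammaPDFReal_nonneg ha hr))
    (measurable_gammaPDFReal a r).aestronglyMeasurable]
  change (∫⁻ x, gammaPDF a r x).toReal = 1
  rw [lintegral_gammaPDF_eq_one ha hr, ENNReal.toReal_one]

lemma mul_gammaPDFReal {a r : ℝ} (ha : a ≠ 0) (hr : r ≠ 0) (x : ℝ) :
    x * gammaPDFReal a r x = a / r * gammaPDFReal (a + 1) r x := by
  by_cases hx : 0 ≤ x
  · rw [gammaPDFReal, gammaPDFReal, if_pos hx, if_pos hx, Gamma_add_one ha, rpow_add_one hr,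
      add_sub_cancel_right, show x ^ a = x * x ^ (a - 1) by
        rw [← rpow_one_add' hx (by simpa using ha)]; ring_nf]
    field_simp
  · simp [gammaPDFReal, hx]

lemma integrable_mul_gammaPDFReal {a r : ℝ} (ha : 0 < a) (hr : 0 < r) :
    Integrable fun x ↦ x * gammaPDFReal a r x := by
  simp_rw [mul_gammaPDFReal ha.ne' hr.ne']
  exact (integrable_gammaPDFReal (by positivity) hr).const_mul _

lemma integral_mul_gammaPDFReal {a r : ℝ} (ha : 0 < a) (hr : 0 < r) :
    ∫ x, x * gammaPDFReal a r x = a / r := by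
  simp_rw [mul_gammaPDFReal ha.ne' hr.ne']
  rw [integral_const_mul, integral_gammaPDFReal (by positivity) hr, mul_one]

section Mixture

variable {ι : Type*} (s : Finset ι) (w : ι → ℝ) {a : ι → ℝ} {r : ℝ}

lemma integrable_sum_mul_gammaPDFReal (ha : ∀ i ∈ s, 0 < a i) (hr : 0 < r) :
    Integrable fun x ↦ ∑ i ∈ s, w i * gammaPDFReal (a i) r x :=
  integrable_finsetSum _ fun i hi ↦ (integrable_gammaPDFReal (ha i hi) hr).const_mul _

lemma integral_sum_mul_gammaPDFReal (ha : ∀ i ∈ s, 0 < a i) (hr : 0 < r) :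
    ∫ x, ∑ i ∈ s, w i * gammaPDFReal (a i) r x = ∑ i ∈ s, w i := by
  rw [integral_finsetSum _ fun i hi ↦ (integrable_gammaPDFReal (ha i hi) hr).const_mul _]
  refine sum_congr rfl fun i hi ↦ ?_
  rw [integral_const_mul, integral_gammaPDFReal (ha i hi) hr, mul_one]

lemma integrable_mul_sum_mul_gammaPDFReal (ha : ∀ i ∈ s, 0 < a i) (hr : 0 < r) :
    Integrable fun x ↦ x * ∑ i ∈ s, w i * gammaPDFReal (a i) r x := by
  simp_rw [mul_sum, mul_left_comm _ (w _)]
  exact integrable_finsetSum _ fun i hi ↦ (integrable_mul_gammaPDFReal (ha i hi) hr).const_mul _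

lemma integral_mul_sum_mul_gammaPDFReal (ha : ∀ i ∈ s, 0 < a i) (hr : 0 < r) :
    ∫ x, x * ∑ i ∈ s, w i * gammaPDFReal (a i) r x = ∑ i ∈ s, w i * (a i / r) := by
  simp_rw [mul_sum, mul_left_comm _ (w _)]
  rw [integral_finsetSum _ fun i hi ↦ (integrable_mul_gammaPDFReal (ha i hi) hr).const_mul _]
  refine sum_congr rfl fun i hi ↦ ?_
  rw [integral_const_mul, integral_mul_gammaPDFReal (ha i hi) hr]

end Mixture

end ProbabilityTheory

namespace bernsteinPolynomial

lemma sum_eval {R : Type*} [CommRing R] (n : ℕ) (x : R) :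
    ∑ ν ∈ range (n + 1), (bernsteinPolynomial R n ν).eval x = 1 := by
  rw [← eval_finsetSum, bernsteinPolynomial.sum, eval_one]

lemma sum_mul_eval {R : Type*} [CommRing R] (n : ℕ) (x : R) :
    ∑ ν ∈ range (n + 1), ν * (bernsteinPolynomial R n ν).eval x = n * x := by
  simpa [eval_finsetSum] using congrArg (eval x) (sum_smul R n)

lemma sum_eval_mul_add_one_div {K : Type*} [Field K] (n : ℕ) (x c : K) :
    ∑ ν ∈ range (n + 1), (bernsteinPolynomial K n ν).eval x * ((ν + 1) / c) =
      (n * x + 1) / c := by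
  calc ∑ ν ∈ range (n + 1), (bernsteinPolynomial K n ν).eval x * ((ν + 1) / c)
      = (∑ ν ∈ range (n + 1), ν * (bernsteinPolynomial K n ν).eval x +
          ∑ ν ∈ range (n + 1), (bernsteinPolynomial K n ν).eval x) / c := by
        rw [← sum_add_distrib, sum_div]
        exact sum_congr rfl fun ν _ ↦ by ring
    _ = (n * x + 1) / c := by
        rw [sum_mul_eval, sum_eval]

end bernsteinPolynomial

lemma ssrPdf_eq_sum_eval_bernsteinPolynomial_mul_gammaPDFReal {b Ω : ℝ} (hb : 0 < b)
    (hΩ : 0 ≤ Ω) (m : ℕ) {y : ℝ} (hy : 0 ≤ y) :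
    ssrPdf b m Ω y = ∑ i ∈ range m,
      (bernsteinPolynomial ℝ (m - 1) i).eval (Ω / (2 * b * m + Ω)) *
        gammaPDFReal (i + 1) (m / (2 * b * m + Ω)) y := by
  rcases m with _ | n
  · simp [ssrPdf]
  set p := 2 * b * (n + 1 : ℕ) + Ω with hp_def
  have hp : 0 < p := by positivity
  set α := ((n + 1 : ℕ) : ℝ) / p
  have hq : 1 - Ω / p = 2 * b * α := by simp only [α, hp_def]; field_simp; ring
  have hrate : -((n + 1 : ℕ) * y) / p = -(α * y) := by ring
  have hweight : 2 * b * (n + 1 : ℕ) / p = 2 * b * α := by ring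
  have hpow : Ω * y / (2 * b * p) = Ω / p * y / (2 * b) := by field_simp
  rw [ssrPdf, hrate, hweight, hpow, mul_sum, Nat.add_sub_cancel]
  refine sum_congr rfl fun i hi ↦ ?_
  obtain ⟨j, rfl⟩ := Nat.exists_eq_add_of_le (mem_range_succ_iff.mp hi)
  simp only [gammaPDFReal_natCast_add_one _ _ hy, bernsteinPolynomial, eval_mul, eval_pow,
    eval_natCast, eval_X, eval_sub, eval_one, hq, Nat.add_sub_cancel_left, div_pow, mul_pow,
    Nat.cast_choose ℝ (Nat.le_add_right i j)]
  field_simp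
  ring

lemma ite_ssrPdf_eq_sum_eval_bernsteinPolynomial_mul_gammaPDFReal {b Ω : ℝ} (hb : 0 < b)
    (hΩ : 0 ≤ Ω) (m : ℕ) (y : ℝ) :
    (if 0 ≤ y then ssrPdf b m Ω y else 0) = ∑ i ∈ range m,
      (bernsteinPolynomial ℝ (m - 1) i).eval (Ω / (2 * b * m + Ω)) *
        gammaPDFReal (i + 1) (m / (2 * b * m + Ω)) y := by
  split_ifs with hy
  · exact ssrPdf_eq_sum_eval_bernsteinPolynomial_mul_gammaPDFReal hb hΩ m hy
  · simp [gammaPDFReal, hy]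

lemma ssrPdf_nonneg {b Ω : ℝ} (hb : 0 < b) (hΩ : 0 ≤ Ω) (m : ℕ) {y : ℝ} (hy : 0 ≤ y) :
    0 ≤ ssrPdf b m Ω y := by
  unfold ssrPdf
  positivity

/-- A squared-shadowed-Rician random variable with integer fading order `m ≥ 1` and
parameters `(b, m, Ω)` is integrable with expectation `2b + Ω`. -/
theorem ssr_expectation
    {Ω' : Type*} [MeasureSpace Ω'] [IsProbabilityMeasure (ℙ : Measure Ω')]
    (b Ω : ℝ) (hb : 0 < b) (hΩ : 0 ≤ Ω) (m : ℕ) (hm : 1 ≤ m)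
    (Y : Ω' → ℝ) (hYm : Measurable Y)
    (hY : MeasureTheory.pdf Y ℙ volume
        =ᵐ[volume] fun y => ENNReal.ofReal (if 0 ≤ y then ssrPdf b m Ω y else 0)) :
    Integrable Y ℙ ∧ ∫ ω, Y ω ∂ℙ = 2 * b + Ω := by
  obtain ⟨n, rfl⟩ := Nat.exists_eq_add_of_le' hm
  have hshape : ∀ i ∈ range (n + 1), (0 : ℝ) < i + 1 := fun i _ ↦ by positivity
  have hrate : (0 : ℝ) < (n + 1 : ℕ) / (2 * b * (n + 1 : ℕ) + Ω) := by positivity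
  have hnonneg : 0 ≤ᵐ[volume] fun y ↦ if 0 ≤ y then ssrPdf b (n + 1) Ω y else 0 := by
    refine ae_of_all _ fun y ↦ ?_
    dsimp only [Pi.zero_apply]
    split_ifs with hy
    exacts [ssrPdf_nonneg hb hΩ _ hy, le_rfl]
  simp_rw [ite_ssrPdf_eq_sum_eval_bernsteinPolynomial_mul_gammaPDFReal hb hΩ] at hY hnonneg ⊢
  refine (integrable_and_integral_eq_of_pdf_ae_eq hYm.aemeasurable hnonneg
    (integrable_sum_mul_gammaPDFReal _ _ hshape hrate) ?_
    (integrable_mul_sum_mul_gammaPDFReal _ _ hshape hrate) hY).imp_right fun h ↦ ?_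
  · rw [integral_sum_mul_gammaPDFReal _ _ hshape hrate, Nat.add_sub_cancel,
      bernsteinPolynomial.sum_eval]
  · rw [h, integral_mul_sum_mul_gammaPDFReal _ _ hshape hrate, Nat.add_sub_cancel,
      bernsteinPolynomial.sum_eval_mul_add_one_div]
    push_cast
    field_simp
    ring
end
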